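/- Let R > 0 and y ∈ ℝ³ with 0 < ‖y‖ < R, set ȳ = (R²/‖y‖²) y, and define the regular part H(x, y) = −(‖x‖² + ‖y‖²)/(8πR³) − R/(4π‖y‖·‖x − ȳ‖) − (1/(4πR)) log(2R²/(R² − ⟨x, y⟩ + ‖y‖·‖x − ȳ‖)). Then H(·, y) is smooth on the open ball {x : ‖x‖ < R} and satisfies Δ_x H(x, y) = −3/(4πR³) for every x with ‖x‖ < R. -/

import Mathlib

/-!
Since `⟪ȳ, y⟫ = R²`, the denominator inside the logarithm equals `‖y‖‖x - ȳ‖ - ⟪x - ȳ, y⟫`, which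
is positive on the ball. There `H(x, y) = -‖x‖²/(8πR³) + h(x)`, where `h` combines a constant,
`1/‖x - ȳ‖` and `log (‖y‖‖x - ȳ‖ - ⟪x - ȳ, y⟫)`. Both functions are harmonic in `ℝ³` by the chain
rule `Δ(g ∘ φ) = g''(φ) ‖∇φ‖² + g'(φ) Δφ`, using `Δ‖w‖ = 2/‖w‖` and, for
`φ = ‖b‖‖w‖ - ⟪w, b⟫`, `‖∇φ‖² = 2‖b‖φ/‖w‖` and `Δφ = 2‖b‖/‖w‖`. With `Δ‖x‖² = 6` this leaves
`ΔH = -6/(8πR³)`.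
-/

open Real
open scoped RealInnerProductSpace

/-- The Euclidean Laplacian in `ℝ³`: the sum of the pure second partial derivatives. -/
noncomputable def laplacian (f : EuclideanSpace ℝ (Fin 3) → ℝ)
    (x : EuclideanSpace ℝ (Fin 3)) : ℝ :=
  ∑ i : Fin 3,
    fderiv ℝ (fun z => fderiv ℝ f z (EuclideanSpace.single i (1 : ℝ))) x
      (EuclideanSpace.single i (1 : ℝ))

/-- The regular part of the Neumann function of the ball `B_R ⊆ ℝ³`:
`H(x, y) = −(‖x‖² + ‖y‖²)/(8πR³) − R/(4π‖y‖‖x − ȳ‖)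
  − (1/(4πR)) log(2R²/(R² − ⟨x,y⟩ + ‖y‖‖x − ȳ‖))`, where `ȳ = (R²/‖y‖²) y`. -/
noncomputable def Hreg (R : ℝ) (x y : EuclideanSpace ℝ (Fin 3)) : ℝ :=
  -((‖x‖ ^ 2 + ‖y‖ ^ 2) / (8 * π * R ^ 3))
    - R / (4 * π * ‖y‖ * ‖x - (R ^ 2 / ‖y‖ ^ 2) • y‖)
    - (1 / (4 * π * R)) *
        Real.log (2 * R ^ 2 / (R ^ 2 - ⟪x, y⟫ + ‖y‖ * ‖x - (R ^ 2 / ‖y‖ ^ 2) • y‖))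

open Filter Topology InnerProductSpace
open scoped Laplacian

section Gradients

variable {E : Type*} [NormedAddCommGroup E] [InnerProductSpace ℝ E] {a x : E}

theorem contDiffAt_norm_sub {n : WithTop ℕ∞} (hx : x ≠ a) :
    ContDiffAt ℝ n (fun z => ‖z - a‖) x :=
  (contDiffAt_id.sub contDiffAt_const).norm ℝ (sub_ne_zero.2 hx)

theorem contDiffAt_mul_norm_sub_sub_inner {n : WithTop ℕ∞} (b : E) (hx : x ≠ a) :
    ContDiffAt ℝ n (fun z => ‖b‖ * ‖z - a‖ - ⟪z - a, b⟫) x :=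
  (contDiffAt_const.mul (contDiffAt_norm_sub hx)).sub
    ((contDiffAt_id.sub contDiffAt_const).inner ℝ contDiffAt_const)

variable [CompleteSpace E]

theorem hasGradientAt_norm_sub (hx : x ≠ a) :
    HasGradientAt (fun z => ‖z - a‖) (‖x - a‖⁻¹ • (x - a)) x := by
  have hr : ‖x - a‖ ≠ 0 := norm_ne_zero_iff.2 (sub_ne_zero.2 hx)
  have h := (Real.hasDerivAt_sqrt (pow_ne_zero 2 hr)).comp_hasFDerivAt x
    ((hasFDerivAt_id x).sub_const a).norm_sq
  refine hasGradientAt_iff_hasFDerivAt.2 ((h.congr_fderiv ?_).congr_of_eventuallyEq ?_)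
  · ext v
    simp only [Real.sqrt_sq (norm_nonneg _), one_div, mul_inv_rev, id_eq, map_sub, map_smul,
      ContinuousLinearMap.comp_id, smul_apply, sub_apply, coe_innerSL_apply, nsmul_eq_mul,
      Nat.cast_ofNat, smul_eq_mul, toDual_apply_apply]
    field_simp
  · exact .of_eq (funext fun z => by simp [Real.sqrt_sq (norm_nonneg _)])

theorem hasGradientAt_inner_sub (a b x : E) : HasGradientAt (fun z => ⟪z - a, b⟫) b x := by
  have h := ((innerSL ℝ b).hasFDerivAt (x := x)).sub_const ⟪b, a⟫
  refine hasGradientAt_iff_hasFDerivAt.2 ((h.congr_fderiv ?_).congr_of_eventuallyEq (.of_eq ?_))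
  · ext v
    simp
  · funext z
    simp [inner_sub_left, real_inner_comm]

theorem hasGradientAt_mul_norm_sub_sub_inner (b : E) (hx : x ≠ a) :
    HasGradientAt (fun z => ‖b‖ * ‖z - a‖ - ⟪z - a, b⟫) (‖b‖ • (‖x - a‖⁻¹ • (x - a)) - b) x := by
  have h := ((hasGradientAt_iff_hasFDerivAt.1 (hasGradientAt_norm_sub hx)).const_mul ‖b‖).sub
    (hasGradientAt_iff_hasFDerivAt.1 (hasGradientAt_inner_sub a b x))
  refine hasGradientAt_iff_hasFDerivAt.2 (h.congr_fderiv ?_)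
  simp [map_sub, map_smul]

end Gradients

section Laplacian

variable {E : Type*} [NormedAddCommGroup E] [InnerProductSpace ℝ E] [FiniteDimensional ℝ E]

theorem laplacian_eq_sum_fderiv_fderiv {ι : Type*} [Fintype ι] (f : E → ℝ)
    (b : OrthonormalBasis ι ℝ E) (x : E) :
    Δ f x = ∑ i, fderiv ℝ (fderiv ℝ f) x (b i) (b i) := by
  simp [laplacian_eq_iteratedFDeriv_orthonormalBasis f b, iteratedFDeriv_two_apply]

theorem laplacian_comp_of_hasDerivAt {g g' : ℝ → ℝ} {g'' : ℝ} {φ : E → ℝ} {x G : E}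
    (hφ : ContDiffAt ℝ 2 φ x) (hG : HasGradientAt φ G x)
    (hg : ∀ᶠ t in 𝓝 (φ x), HasDerivAt g (g' t) t) (hg' : HasDerivAt g' g'' (φ x)) :
    Δ (fun z => g (φ z)) x = g'' * ‖G‖ ^ 2 + g' (φ x) * Δ φ x := by
  have hφ' : ∀ᶠ z in 𝓝 x, DifferentiableAt ℝ φ z :=
    (hφ.eventually (by simp)).mono fun z hz => hz.differentiableAt (by norm_num)
  have hfd : fderiv ℝ (fun z => g (φ z)) =ᶠ[𝓝 x] fun z => g' (φ z) • fderiv ℝ φ z := by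
    filter_upwards [hφ', hφ.continuousAt.eventually hg] with z hz hgz
    exact (hgz.comp_hasFDerivAt z hz.hasFDerivAt).fderiv
  have hD : HasFDerivAt (fun z => g' (φ z) • fderiv ℝ φ z)
      (g' (φ x) • fderiv ℝ (fderiv ℝ φ) x + (g'' • fderiv ℝ φ x).smulRight (fderiv ℝ φ x)) x :=
    (hg'.comp_hasFDerivAt x hφ'.self_of_nhds.hasFDerivAt).smul
      ((hφ.fderiv_right (m := 1) (by norm_num)).differentiableAt one_ne_zero).hasFDerivAt
  set b := stdOrthonormalBasis ℝ E
  rw [laplacian_eq_sum_fderiv_fderiv _ b, laplacian_eq_sum_fderiv_fderiv _ b,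
    hfd.fderiv_eq, hD.fderiv, ← b.sum_sq_inner_left G, Finset.mul_sum, Finset.mul_sum,
    ← Finset.sum_add_distrib]
  refine Finset.sum_congr rfl fun i _ => ?_
  simp only [add_apply, smul_apply, ContinuousLinearMap.smulRight_apply, hG.fderiv_apply,
    smul_eq_mul]
  ring

theorem laplacian_norm_sub_sq (a x : E) :
    Δ (fun z => ‖z - a‖ ^ 2) x = 2 * Module.finrank ℝ E := by
  have hfd : fderiv ℝ (fun z => ‖z - a‖ ^ 2) = fun z => 2 • innerSL ℝ (z - a) := by
    funext z
    simpa using ((hasFDerivAt_id z).sub_const a).norm_sq.fderiv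
  have hD : HasFDerivAt (fun z => 2 • innerSL ℝ (z - a)) (2 • innerSL ℝ : E →L[ℝ] E →L[ℝ] ℝ) x :=
    ((innerSL ℝ).hasFDerivAt.comp x ((hasFDerivAt_id x).sub_const a)).const_smul 2
  set b := stdOrthonormalBasis ℝ E
  have hb : ∀ i, innerSL ℝ (b i) (b i) = 1 := fun i => by
    rw [innerSL_apply_apply, real_inner_self_eq_norm_sq, b.orthonormal.1 i, one_pow]
  rw [laplacian_eq_sum_fderiv_fderiv _ b, hfd, hD.fderiv]
  simp [hb, mul_comm]

theorem laplacian_inner_sub (a b x : E) : Δ (fun z => ⟪z - a, b⟫) x = 0 := by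
  have hfd : fderiv ℝ (fun z => ⟪z - a, b⟫) = fun _ => toDual ℝ E b :=
    funext fun z => (hasGradientAt_iff_hasFDerivAt.1 (hasGradientAt_inner_sub a b z)).fderiv
  rw [laplacian_eq_sum_fderiv_fderiv _ (stdOrthonormalBasis ℝ E), hfd]
  simp

variable {a x : E}

theorem laplacian_norm_sub (hx : x ≠ a) :
    Δ (fun z => ‖z - a‖) x = (Module.finrank ℝ E - 1) / ‖x - a‖ := by
  have hr : ‖x - a‖ ≠ 0 := norm_ne_zero_iff.2 (sub_ne_zero.2 hx)
  -- `Δ (r ^ 2) = 2 ‖∇r‖ ^ 2 + 2 r Δr` with `‖∇r‖ = 1`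
  have h := laplacian_comp_of_hasDerivAt (g := fun t => t ^ 2) (g' := fun t => 2 * t)
    (contDiffAt_norm_sub hx) (hasGradientAt_norm_sub hx)
    (.of_forall fun t => by simpa using hasDerivAt_pow 2 t)
    (by simpa using (hasDerivAt_id ‖x - a‖).const_mul 2)
  rw [laplacian_norm_sub_sq, norm_smul, norm_inv, norm_norm, inv_mul_cancel₀ hr] at h
  field_simp
  linarith

theorem laplacian_mul_norm_sub_sub_inner (b : E) (hx : x ≠ a) :
    Δ (fun z => ‖b‖ * ‖z - a‖ - ⟪z - a, b⟫) x
      = ‖b‖ * ((Module.finrank ℝ E - 1) / ‖x - a‖) := by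
  have hnorm : ContDiffAt ℝ 2 (fun z => ‖b‖ * ‖z - a‖) x :=
    contDiffAt_const.mul (contDiffAt_norm_sub hx)
  have hinner : ContDiffAt ℝ 2 (fun z => ⟪z - a, b⟫) x :=
    (contDiffAt_id.sub contDiffAt_const).inner ℝ contDiffAt_const
  have h := hnorm.laplacian_sub hinner
  have hsmul := laplacian_smul ‖b‖ (contDiffAt_norm_sub (n := 2) hx)
  simp only [Pi.sub_def, Pi.smul_def, smul_eq_mul] at h hsmul
  rw [h, laplacian_inner_sub, hsmul, laplacian_norm_sub hx, sub_zero]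

theorem harmonicAt_inv_norm_sub (hE : Module.finrank ℝ E = 3) (hx : x ≠ a) :
    HarmonicAt (fun z => ‖z - a‖⁻¹) x := by
  refine ⟨(contDiffAt_norm_sub hx).inv (norm_ne_zero_iff.2 (sub_ne_zero.2 hx)), ?_⟩
  filter_upwards [eventually_ne_nhds hx] with z hz
  have hr : ‖z - a‖ ≠ 0 := norm_ne_zero_iff.2 (sub_ne_zero.2 hz)
  have hd : HasDerivAt (fun t : ℝ => -(t ^ 2)⁻¹) (2 * ‖z - a‖ / (‖z - a‖ ^ 2) ^ 2) ‖z - a‖ := by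
    simpa [neg_div] using ((hasDerivAt_pow 2 ‖z - a‖).fun_inv (pow_ne_zero 2 hr)).fun_neg
  rw [laplacian_comp_of_hasDerivAt (g := Inv.inv) (contDiffAt_norm_sub hz)
    (hasGradientAt_norm_sub hz) ((eventually_ne_nhds hr).mono fun t ht => hasDerivAt_inv ht) hd,
    laplacian_norm_sub hz, hE, norm_smul, norm_inv, norm_norm, inv_mul_cancel₀ hr, Pi.zero_apply]
  field_simp
  ring

theorem harmonicAt_log_mul_norm_sub_sub_inner (hE : Module.finrank ℝ E = 3) (b : E)
    (hx : 0 < ‖b‖ * ‖x - a‖ - ⟪x - a, b⟫) :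
    HarmonicAt (fun z => Real.log (‖b‖ * ‖z - a‖ - ⟪z - a, b⟫)) x := by
  have hxa : x ≠ a := by rintro rfl; simp at hx
  have hpos : ∀ᶠ z in 𝓝 x, 0 < ‖b‖ * ‖z - a‖ - ⟪z - a, b⟫ :=
    (contDiffAt_mul_norm_sub_sub_inner (n := 0) b hxa).continuousAt.eventually (lt_mem_nhds hx)
  refine ⟨(contDiffAt_mul_norm_sub_sub_inner b hxa).log hx.ne', ?_⟩
  filter_upwards [hpos] with z hz
  have hza : z ≠ a := by rintro rfl; simp at hz
  have hr : ‖z - a‖ ≠ 0 := norm_ne_zero_iff.2 (sub_ne_zero.2 hza)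
  have hgrad : ‖‖b‖ • (‖z - a‖⁻¹ • (z - a)) - b‖ ^ 2
      = 2 * ‖b‖ * (‖b‖ * ‖z - a‖ - ⟪z - a, b⟫) / ‖z - a‖ := by
    rw [norm_sub_sq_real, norm_smul, norm_smul, norm_inv]
    simp only [norm_norm, inv_mul_cancel₀ hr, real_inner_smul_left]
    field_simp
    ring
  rw [laplacian_comp_of_hasDerivAt (g := Real.log) (g' := Inv.inv)
    (contDiffAt_mul_norm_sub_sub_inner b hza) (hasGradientAt_mul_norm_sub_sub_inner b hza)
    ((eventually_ne_nhds hz.ne').mono fun t ht => Real.hasDerivAt_log ht) (hasDerivAt_inv hz.ne'),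
    laplacian_mul_norm_sub_sub_inner b hza, hE, hgrad, Pi.zero_apply]
  field_simp
  ring

theorem InnerProductSpace.HarmonicAt.laplacian_add {f h : E → ℝ} (hh : HarmonicAt h x)
    (hf : ContDiffAt ℝ 2 f x) : Δ (fun z => f z + h z) x = Δ f x := by
  rw [← Pi.add_def, hf.laplacian_add hh.1, hh.2.self_of_nhds, Pi.zero_apply, add_zero]

end Laplacian

theorem laplacian_eq_laplacian_of_contDiffAt {f : EuclideanSpace ℝ (Fin 3) → ℝ}
    {x : EuclideanSpace ℝ (Fin 3)} (hf : ContDiffAt ℝ 2 f x) : laplacian f x = Δ f x := by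
  have hf' : DifferentiableAt ℝ (fderiv ℝ f) x :=
    (hf.fderiv_right (m := 1) (by norm_num)).differentiableAt one_ne_zero
  rw [laplacian_eq_sum_fderiv_fderiv f (EuclideanSpace.basisFun (Fin 3) ℝ), laplacian]
  refine Finset.sum_congr rfl fun i _ => ?_
  rw [fderiv_clm_apply hf' (differentiableAt_const _), EuclideanSpace.basisFun_apply]
  simp

section RegularPart

variable {E : Type*} [NormedAddCommGroup E] [InnerProductSpace ℝ E] {R : ℝ} {x y : E}

noncomputable def imagePoint (R : ℝ) (y : E) : E := (R ^ 2 / ‖y‖ ^ 2) • y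

theorem inner_sub_imagePoint (hy : y ≠ 0) (x : E) :
    ⟪x - imagePoint R y, y⟫ = ⟪x, y⟫ - R ^ 2 := by
  have : ‖y‖ ≠ 0 := norm_ne_zero_iff.2 hy
  rw [inner_sub_left, imagePoint, real_inner_smul_left, real_inner_self_eq_norm_sq]
  field_simp

theorem ne_imagePoint (hy : 0 < ‖y‖) (hyR : ‖y‖ < R) (hx : ‖x‖ < R) : x ≠ imagePoint R y := by
  rintro rfl
  rw [imagePoint, norm_smul, Real.norm_eq_abs, abs_of_nonneg (by positivity)] at hx
  have : R ^ 2 < R * ‖y‖ := by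
    field_simp at hx
    linarith
  nlinarith

theorem mul_norm_sub_imagePoint_sub_inner_pos (hy : 0 < ‖y‖) (hyR : ‖y‖ < R) (hx : ‖x‖ < R) :
    0 < ‖y‖ * ‖x - imagePoint R y‖ - ⟪x - imagePoint R y, y⟫ := by
  rw [inner_sub_imagePoint (norm_pos_iff.1 hy)]
  have := real_inner_le_norm x y
  have : ‖x‖ * ‖y‖ < R ^ 2 := by nlinarith [norm_nonneg x]
  nlinarith [norm_nonneg (x - imagePoint R y)]

noncomputable def Hharm (R : ℝ) (x y : E) : ℝ :=
  -(‖y‖ ^ 2 / (8 * π * R ^ 3)) - Real.log (2 * R ^ 2) / (4 * π * R)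
    - R / (4 * π * ‖y‖) * ‖x - imagePoint R y‖⁻¹
    + (4 * π * R)⁻¹ * Real.log (‖y‖ * ‖x - imagePoint R y‖ - ⟪x - imagePoint R y, y⟫)

theorem contDiffAt_Hharm {n : WithTop ℕ∞} (hy : 0 < ‖y‖) (hyR : ‖y‖ < R) (hx : ‖x‖ < R) :
    ContDiffAt ℝ n (fun z => Hharm R z y) x := by
  have hxy := ne_imagePoint hy hyR hx
  exact (contDiffAt_const.sub (contDiffAt_const.mul ((contDiffAt_norm_sub hxy).inv
    (norm_ne_zero_iff.2 (sub_ne_zero.2 hxy))))).add (contDiffAt_const.mul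
    ((contDiffAt_mul_norm_sub_sub_inner y hxy).log
      (mul_norm_sub_imagePoint_sub_inner_pos hy hyR hx).ne'))

theorem harmonicAt_Hharm [FiniteDimensional ℝ E] (hE : Module.finrank ℝ E = 3)
    (hy : 0 < ‖y‖) (hyR : ‖y‖ < R) (hx : ‖x‖ < R) :
    HarmonicAt (fun z => Hharm R z y) x :=
  ((harmonicAt_const _).sub ((harmonicAt_inv_norm_sub hE (ne_imagePoint hy hyR hx)).const_smul
    (c := R / (4 * π * ‖y‖)))).add
    ((harmonicAt_log_mul_norm_sub_sub_inner hE y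
      (mul_norm_sub_imagePoint_sub_inner_pos hy hyR hx)).const_smul (c := (4 * π * R)⁻¹))

end RegularPart

theorem Hreg_eq_of_norm_lt {R : ℝ} {x y : EuclideanSpace ℝ (Fin 3)} (hy : 0 < ‖y‖)
    (hyR : ‖y‖ < R) (hx : ‖x‖ < R) :
    Hreg R x y = -(8 * π * R ^ 3)⁻¹ * ‖x‖ ^ 2 + Hharm R x y := by
  have hR : 0 < R := hy.trans hyR
  have harg : ‖y‖ * ‖x - imagePoint R y‖ - ⟪x - imagePoint R y, y⟫
      = R ^ 2 - ⟪x, y⟫ + ‖y‖ * ‖x - imagePoint R y‖ := by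
    rw [inner_sub_imagePoint (norm_pos_iff.1 hy)]
    ring
  have hu := harg ▸ mul_norm_sub_imagePoint_sub_inner_pos hy hyR hx
  rw [Hreg, Hharm, harg, ← imagePoint, Real.log_div (by positivity) hu.ne']
  field_simp
  ring

theorem regular_part_laplacian (R : ℝ)
    (y : EuclideanSpace ℝ (Fin 3)) (hy0 : 0 < ‖y‖) (hyR : ‖y‖ < R) :
    ContDiffOn ℝ (⊤ : ℕ∞) (fun x => Hreg R x y)
        {x : EuclideanSpace ℝ (Fin 3) | ‖x‖ < R} ∧
    ∀ x : EuclideanSpace ℝ (Fin 3), ‖x‖ < R →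
      laplacian (fun x => Hreg R x y) x = -3 / (4 * π * R ^ 3) := by
  have hE : Module.finrank ℝ (EuclideanSpace ℝ (Fin 3)) = 3 := finrank_euclideanSpace_fin
  have hsplit : ∀ x : EuclideanSpace ℝ (Fin 3), ‖x‖ < R → (fun z => Hreg R z y)
      =ᶠ[𝓝 x] fun z => -(8 * π * R ^ 3)⁻¹ * ‖z‖ ^ 2 + Hharm R z y := fun x hx =>
    ((isOpen_lt continuous_norm continuous_const).eventually_mem hx).mono fun z hz =>
      Hreg_eq_of_norm_lt hy0 hyR hz
  have hquad : ∀ {n : WithTop ℕ∞}, ContDiff ℝ n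
      (fun z : EuclideanSpace ℝ (Fin 3) => -(8 * π * R ^ 3)⁻¹ * ‖z‖ ^ 2) :=
    contDiff_const.mul (contDiff_norm_sq ℝ)
  have hsmooth : ∀ {n : WithTop ℕ∞} x, ‖x‖ < R → ContDiffAt ℝ n (fun z => Hreg R z y) x :=
    fun x hx => (hquad.contDiffAt.add (contDiffAt_Hharm hy0 hyR hx)).congr_of_eventuallyEq
      (hsplit x hx)
  refine ⟨fun x hx => (hsmooth x hx).contDiffWithinAt, fun x hx => ?_⟩
  have hΔquad := laplacian_smul (-(8 * π * R ^ 3)⁻¹) ((contDiff_norm_sq ℝ).contDiffAt (x := x))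
  have hΔnorm := laplacian_norm_sub_sq (0 : EuclideanSpace ℝ (Fin 3)) x
  simp only [Pi.smul_def, smul_eq_mul, sub_zero] at hΔquad hΔnorm
  rw [laplacian_eq_laplacian_of_contDiffAt (hsmooth x hx),
    (laplacian_congr_nhds (hsplit x hx)).self_of_nhds,
    (harmonicAt_Hharm hE hy0 hyR hx).laplacian_add hquad.contDiffAt, hΔquad, hΔnorm, hE]
  field_simp
  ring
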